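/- Let (X,ν) be a standard Borel probability space, f: X → X an invertible measure-preserving ergodic transformation, M a compact metric space, and φ: X → Homeo(M) measurable; let F(x,p) = (f(x), φ_x(p)) be the skew product on X×M, and let μ be an F-invariant ergodic Borel probability measure on X×M whose projection to X is ν, with fiberwise disintegration {μ_x}. Assume that for ν-a.e. x, (φ_x)_*μ_x = μ_{f(x)}. Suppose there exist a measurable set Λ ⊆ X×M and constants R > 0, C > 0, 0 < c < 1 such that: (i) μ(Λ) > 1/2; (ii) for every (x,p) ∈ Λ, μ_x(Λ_x) > 1/2, where Λ_x = {q ∈ M : (x,q) ∈ Λ}; (iii) for every (x,p) ∈ Λ, every q ∈ M with d(p,q) ≤ R, and every m ≥ 0, one has d(φ_x^{(m)}(p), φ_x^{(m)}(q)) ≤ C c^m d(p,q). Then for ν-almost every x in the projection B of Λ to X, the fiber measure μ_x has an atom: there exists p ∈ M with μ_x({p}) > 0. -/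

import Mathlib

open MeasureTheory Set
open scoped ENNReal

def fiberIter {X M : Type*} (f : X → X) (φ : X → M → M) : ℕ → X → M → M
  | 0, _, p => p
  | m + 1, x, p => φ (f^[m] x) (fiberIter f φ m x p)

/-!
Cover `M` by finitely many balls of radius `R / 2`. Then every fiber measure with
`μx y Λ_y > 1/2` puts a fixed mass `δ > 0` on a ball of radius `R` centred in `Λ_y`, and the
equivariance `μx (f^m y) = (φ_y^{(m)})_* μx y` together with the contraction on `Λ` moves this
mass into a ball of radius `C c^m R` of the fiber over `f^m y`. The base points `y` with
`μx y Λ_y > 0` form a set of positive measure, so by ergodicity of `f⁻¹` and Poincaré recurrence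
almost every `x` equals `f^m y` for such a `y` and infinitely many `m`. The fiber over `x` thus
gives mass `δ` to balls of radii tending to `0`, and a limit point of their centres is an atom.
-/

open Filter Function Metric Topology

section Recurrence

variable {α : Type*} [MeasurableSpace α] {μ : Measure α} [IsFiniteMeasure μ] {s : Set α}

theorem Ergodic.ae_frequently_iterate_mem {g : α → α} (hg : Ergodic g μ) (hs : MeasurableSet s)
    (h0 : μ s ≠ 0) : ∀ᵐ x ∂μ, ∃ᶠ n in atTop, g^[n] x ∈ s := by
  set B := {x | ∃ᶠ n in atTop, g^[n] x ∈ s}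
  have hB : MeasurableSet B := by
    convert MeasurableSet.measurableSet_limsup fun n => hg.measurable.iterate n hs using 1
    ext x
    rw [mem_limsup_iff_frequently_mem]
    rfl
  have hgB : g ⁻¹' B = B := by
    ext x
    simp only [B, mem_preimage, mem_ofPred_eq, ← iterate_succ_apply]
    conv_rhs => rw [← map_add_atTop_eq_nat 1, frequently_map]
  have hsB : s ≤ᵐ[μ] B :=
    hg.toMeasurePreserving.conservative.ae_mem_imp_frequently_image_mem hs.nullMeasurableSet
  rcases hg.ae_empty_or_univ hB hgB with hB0 | hB1
  · exact absurd (measure_mono_null_ae hsB (ae_eq_empty.1 hB0)) h0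
  · exact ae_eq_univ.1 hB1

/-- The inverse is measurable by the Lusin–Souslin theorem. -/
noncomputable def MeasurableEquiv.ofBijective [StandardBorelSpace α] {f : α → α} (hf : Measurable f)
    (hbij : Bijective f) : α ≃ᵐ α where
  toEquiv := Equiv.ofBijective f hbij
  measurable_toFun := hf
  measurable_invFun t ht := by
    rw [← Equiv.image_eq_preimage_symm]
    exact (hf.measurableEmbedding hbij.injective).measurableSet_image.2 ht

theorem Ergodic.ae_frequently_mem_image_iterate [StandardBorelSpace α] {f : α → α}
    (hf : Ergodic f μ) (hbij : Bijective f) (hs : MeasurableSet s) (h0 : μ s ≠ 0) :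
    ∀ᵐ x ∂μ, ∃ᶠ n in atTop, x ∈ f^[n] '' s := by
  set e := MeasurableEquiv.ofBijective hf.measurable hbij
  filter_upwards [(hf.symm (e := e)).ae_frequently_iterate_mem hs h0] with x hx
  exact hx.mono fun n hn => ⟨_, hn, (LeftInverse.iterate e.apply_symm_apply n) x⟩

end Recurrence

section PseudoMetricSpace

variable {M : Type*} [PseudoMetricSpace M] [MeasurableSpace M]

theorem exists_pos_forall_le_measure_closedBall [CompactSpace M] {r : ℝ} (hr : 0 < r)
    {ε : ℝ≥0∞} (hε : ε ≠ 0) :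
    ∃ δ : ℝ≥0∞, 0 < δ ∧ ∀ (μ : Measure M) (S : Set M), ε ≤ μ S →
      ∃ q ∈ S, δ ≤ μ (closedBall q r) := by
  obtain ⟨t, -, ht⟩ := isCompact_univ.elim_nhds_subcover (fun a : M => ball a (r / 2))
    fun a _ => ball_mem_nhds a (half_pos hr)
  refine ⟨ε / t.card, ENNReal.div_pos hε (ENNReal.natCast_ne_top _), fun μ S hS => ?_⟩
  have hcover : μ S ≤ ∑ a ∈ t, μ (S ∩ ball a (r / 2)) := by
    refine (measure_mono fun q hq => ?_).trans (measure_biUnion_finset_le t _)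
    obtain ⟨a, ha, hqa⟩ := mem_iUnion₂.1 (ht (mem_univ q))
    exact mem_iUnion₂.2 ⟨a, ha, hq, hqa⟩
  have hsum : ∑ a ∈ t, μ (S ∩ ball a (r / 2)) ≠ 0 :=
    fun h => hε (le_zero_iff.1 (h ▸ hS.trans hcover))
  obtain ⟨a, ha, hmax⟩ := t.exists_max_image (fun a => μ (S ∩ ball a (r / 2)))
    (Finset.nonempty_of_sum_ne_zero hsum)
  have hle : ε ≤ t.card * μ (S ∩ ball a (r / 2)) :=
    calc ε ≤ ∑ a ∈ t, μ (S ∩ ball a (r / 2)) := hS.trans hcover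
      _ ≤ t.card • μ (S ∩ ball a (r / 2)) := Finset.sum_le_card_nsmul _ _ _ hmax
      _ = t.card * μ (S ∩ ball a (r / 2)) := nsmul_eq_mul _ _
  obtain ⟨q, hqS, hqa⟩ : (S ∩ ball a (r / 2)).Nonempty :=
    nonempty_of_measure_ne_zero (μ := μ) fun h => hε (by simpa [h] using hle)
  refine ⟨q, hqS, (ENNReal.div_le_of_le_mul' hle).trans (measure_mono fun q' hq' => ?_)⟩
  calc dist q' q ≤ dist q' a + dist q a := dist_triangle_right _ _ _
    _ ≤ r / 2 + r / 2 := add_le_add (mem_ball.1 hq'.2).le (mem_ball.1 hqa).le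
    _ = r := add_halves r

end PseudoMetricSpace

section MetricSpace

variable {M : Type*} [MetricSpace M] [MeasurableSpace M] [OpensMeasurableSpace M]

theorem tendsto_measure_closedBall_nhdsGT_zero (μ : Measure M) [IsFiniteMeasure μ] (p : M) :
    Tendsto (fun ε => μ (closedBall p ε)) (𝓝[>] 0) (𝓝 (μ {p})) := by
  rw [← closure_singleton]
  refine ((tendsto_measure_cthickening ⟨1, one_pos, measure_ne_top μ _⟩).mono_left
    nhdsWithin_le_nhds).congr' ?_
  filter_upwards [self_mem_nhdsWithin] with ε hε
  rw [cthickening_singleton p (le_of_lt hε)]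

theorem exists_le_measure_singleton_of_frequently_le_measure_closedBall [CompactSpace M]
    (μ : Measure M) [IsFiniteMeasure μ] {δ : ℝ≥0∞} {r : ℕ → ℝ} (hr : Tendsto r atTop (𝓝 0))
    (h : ∃ᶠ n in atTop, ∃ t, δ ≤ μ (closedBall t (r n))) : ∃ p, δ ≤ μ {p} := by
  obtain ⟨ψ, hψ, hψt⟩ := extraction_of_frequently_atTop h
  choose t ht using hψt
  obtain ⟨p, -, σ, hσ, hσt⟩ := isCompact_univ.tendsto_subseq (x := t) fun n => mem_univ _
  have hball : ∀ ε > 0, δ ≤ μ (closedBall p ε) := by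
    intro ε hε
    have hrσ : Tendsto (fun j => r (ψ (σ j))) atTop (𝓝 0) :=
      hr.comp (hψ.comp hσ).tendsto_atTop
    obtain ⟨j, hrj, htj⟩ := ((hrσ.eventually (gt_mem_nhds (half_pos hε))).and
      (hσt.eventually (ball_mem_nhds p (half_pos hε)))).exists
    refine (ht (σ j)).trans (measure_mono (closedBall_subset_closedBall' ?_))
    linarith [show dist (t (σ j)) p < ε / 2 from htj]
  exact ⟨p, ge_of_tendsto (tendsto_measure_closedBall_nhdsGT_zero μ p)
    (eventually_nhdsWithin_of_forall hball)⟩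

end MetricSpace

theorem exists_measurableSet_measure_ne_zero_of_lintegral_ne_zero {α : Type*}
    [MeasurableSpace α] {ν : Measure α} {g : α → ℝ≥0∞} {p : α → Prop}
    (hg : ∫⁻ x, g x ∂ν ≠ 0) (hp : ∀ᵐ x ∂ν, p x) :
    ∃ s, MeasurableSet s ∧ ν s ≠ 0 ∧ ∀ x ∈ s, g x ≠ 0 ∧ p x := by
  obtain ⟨g', hg'm, hg'le, hg'eq⟩ := exists_measurable_le_lintegral_eq ν g
  refine ⟨{x | g' x ≠ 0} \ toMeasurable ν {x | ¬p x},
    (hg'm (measurableSet_singleton 0)).compl.diff (measurableSet_toMeasurable _ _), ?_,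
    fun x hx => ⟨fun h => hx.1 (le_zero_iff.1 (h ▸ hg'le x)), ?_⟩⟩
  · rw [measure_sdiff_null (by rwa [measure_toMeasurable, ← ae_iff])]
    exact fun h0 => hg (hg'eq ▸ (lintegral_eq_zero_iff hg'm).2 (ae_iff.2 h0))
  · by_contra h
    exact hx.2 (subset_toMeasurable _ _ h)

section FiberIter

variable {X M : Type*} [MeasurableSpace M] {f : X → X} {φ : X → M → M}

theorem measurable_fiberIter (hφ : ∀ x, Measurable (φ x)) (m : ℕ) (x : X) :
    Measurable (fiberIter f φ m x) := by
  induction m with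
  | zero => exact measurable_id
  | succ m ih => exact (hφ _).comp ih

theorem map_fiberIter_eq_of_forall_map_eq (hφ : ∀ x, Measurable (φ x)) {μx : X → Measure M}
    {x : X} (h : ∀ m, (μx (f^[m] x)).map (φ (f^[m] x)) = μx (f (f^[m] x))) (m : ℕ) :
    (μx x).map (fiberIter f φ m x) = μx (f^[m] x) := by
  induction m with
  | zero => exact Measure.map_id
  | succ m ih =>
    rw [iterate_succ_apply', ← h m, ← ih, Measure.map_map (hφ _) (measurable_fiberIter hφ m x)]
    rfl

theorem measure_closedBall_le_measure_closedBall_fiberIter [PseudoMetricSpace M]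
    (hφ : ∀ x, Measurable (φ x)) {μx : X → Measure M} {x : X}
    (h : ∀ m, (μx (f^[m] x)).map (φ (f^[m] x)) = μx (f (f^[m] x))) {m : ℕ} {q : M} {R ε : ℝ}
    (hcontr : ∀ q' ∈ closedBall q R, dist (fiberIter f φ m x q') (fiberIter f φ m x q) ≤ ε) :
    μx x (closedBall q R) ≤ μx (f^[m] x) (closedBall (fiberIter f φ m x q) ε) := by
  rw [← map_fiberIter_eq_of_forall_map_eq hφ h m]
  exact (measure_mono hcontr).trans
    (Measure.le_map_apply (measurable_fiberIter hφ m x).aemeasurable _)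

end FiberIter

theorem fiber_measures_have_atoms_general
    {X : Type*} [MeasurableSpace X] [StandardBorelSpace X]
    (ν : Measure X) [IsProbabilityMeasure ν]
    (f : X → X) (hfbij : Function.Bijective f)
    (hferg : Ergodic f ν)
    {M : Type*} [MetricSpace M] [CompactSpace M] [MeasurableSpace M] [BorelSpace M]
    (φ : X → M → M)
    (hφcont : ∀ x, Continuous (φ x))
    (μ : Measure (X × M))
    (μx : X → Measure M) (hμxprob : ∀ x, IsProbabilityMeasure (μx x))
    (hdisint : ∀ E : Set (X × M), MeasurableSet E →
      μ E = ∫⁻ x, μx x {p | (x, p) ∈ E} ∂ν)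
    (hequiv : ∀ᵐ x ∂ν, (μx x).map (φ x) = μx (f x))
    (Λ : Set (X × M)) (hΛmeas : MeasurableSet Λ)
    (R C c : ℝ) (hR : 0 < R) (hC : 0 < C) (hc0 : 0 < c) (hc1 : c < 1)
    (hΛμ : 1 / 2 < μ Λ)
    (hΛfib : ∀ z ∈ Λ, 1 / 2 < μx z.1 {q : M | (z.1, q) ∈ Λ})
    (hcontr : ∀ z ∈ Λ, ∀ q : M, dist z.2 q ≤ R → ∀ m : ℕ,
      dist (fiberIter f φ m z.1 z.2) (fiberIter f φ m z.1 q) ≤ C * c ^ m * dist z.2 q) :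
    ∀ᵐ x ∂ν, x ∈ Prod.fst '' Λ → ∃ p : M, 0 < μx x {p} := by
  have hφ : ∀ x, Measurable (φ x) := fun x => (hφcont x).measurable
  obtain ⟨δ, hδ, hmass⟩ :=
    exists_pos_forall_le_measure_closedBall (M := M) hR (ε := 1 / 2) (by norm_num)
  have horbit : ∀ᵐ x ∂ν, ∀ m, (μx (f^[m] x)).map (φ (f^[m] x)) = μx (f (f^[m] x)) :=
    ae_all_iff.2 fun m => (hferg.quasiMeasurePreserving.iterate m).ae hequiv
  -- `x ↦ μx x Λₓ` need not be measurable, hence the measurable set `G` of good base points.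
  obtain ⟨G, hGmeas, hG0, hG⟩ :=
    exists_measurableSet_measure_ne_zero_of_lintegral_ne_zero
      (g := fun x => μx x {p | (x, p) ∈ Λ}) (hdisint Λ hΛmeas ▸ (zero_le.trans_lt hΛμ).ne')
      horbit
  have hradius : Tendsto (fun m : ℕ => C * c ^ m * R) atTop (𝓝 0) := by
    simpa using ((tendsto_pow_atTop_nhds_zero_of_lt_one hc0.le hc1).const_mul C).mul_const R
  filter_upwards [hferg.ae_frequently_mem_image_iterate hfbij hGmeas hG0] with x hx _
  have := hμxprob x
  refine (exists_le_measure_singleton_of_frequently_le_measure_closedBall (μx x) hradius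
    (hx.mono ?_)).imp fun p hp => hδ.trans_le hp
  rintro m ⟨y, hyG, rfl⟩
  obtain ⟨q₀, hq₀⟩ := nonempty_of_measure_ne_zero (hG y hyG).1
  obtain ⟨q, hqΛ, hq⟩ := hmass (μx y) _ (hΛfib (y, q₀) hq₀).le
  refine ⟨fiberIter f φ m y q, hq.trans
    (measure_closedBall_le_measure_closedBall_fiberIter hφ (hG y hyG).2 fun q' hq' => ?_)⟩
  rw [mem_closedBall, dist_comm] at hq'
  calc dist (fiberIter f φ m y q') (fiberIter f φ m y q)
      ≤ C * c ^ m * dist q q' := by rw [dist_comm]; exact hcontr (y, q) hqΛ q' hq' m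
    _ ≤ C * c ^ m * R := by gcongr

/-- **Main analytic step in Theorem II.** Under the fiberwise exponential contraction
hypothesis on a set `Λ` of measure `> 1/2`, for `ν`-a.e. base point `x` in the projection
of `Λ`, the fiber measure `μx x` has an atom. -/
theorem fiber_measures_have_atoms
    {X : Type*} [MeasurableSpace X] [StandardBorelSpace X]
    (ν : Measure X) [IsProbabilityMeasure ν]
    (f : X → X) (hf : MeasurePreserving f ν ν) (hfbij : Function.Bijective f)
    (hferg : Ergodic f ν)
    {M : Type*} [MetricSpace M] [CompactSpace M] [MeasurableSpace M] [BorelSpace M]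
    (φ : X → M → M)
    (hφcont : ∀ x, Continuous (φ x)) (hφbij : ∀ x, Function.Bijective (φ x))
    (hφmeas : Measurable fun z : X × M => φ z.1 z.2)
    (μ : Measure (X × M)) [IsProbabilityMeasure μ]
    (hFinv : MeasurePreserving (fun z : X × M => (f z.1, φ z.1 z.2)) μ μ)
    (hFerg : Ergodic (fun z : X × M => (f z.1, φ z.1 z.2)) μ)
    (hproj : μ.map Prod.fst = ν)
    (μx : X → Measure M) (hμxprob : ∀ x, IsProbabilityMeasure (μx x))
    (hdisint : ∀ E : Set (X × M), MeasurableSet E →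
      μ E = ∫⁻ x, μx x {p | (x, p) ∈ E} ∂ν)
    (hequiv : ∀ᵐ x ∂ν, (μx x).map (φ x) = μx (f x))
    (Λ : Set (X × M)) (hΛmeas : MeasurableSet Λ)
    (R C c : ℝ) (hR : 0 < R) (hC : 0 < C) (hc0 : 0 < c) (hc1 : c < 1)
    (hΛμ : 1 / 2 < μ Λ)
    (hΛfib : ∀ z ∈ Λ, 1 / 2 < μx z.1 {q : M | (z.1, q) ∈ Λ})
    (hcontr : ∀ z ∈ Λ, ∀ q : M, dist z.2 q ≤ R → ∀ m : ℕ,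
      dist (fiberIter f φ m z.1 z.2) (fiberIter f φ m z.1 q) ≤ C * c ^ m * dist z.2 q) :
    ∀ᵐ x ∂ν, x ∈ Prod.fst '' Λ → ∃ p : M, 0 < μx x {p} :=
  fiber_measures_have_atoms_general ν f hfbij hferg φ hφcont μ μx hμxprob hdisint hequiv Λ hΛmeas R
    C c hR hC hc0 hc1 hΛμ hΛfib hcontr
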